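/- Let t ≥ 1 and d ≥ 3, and let v_p for 0 ≤ p ≤ d and the B-family w_q = (∏_{j=1}^{q} x_{(j−1)t+1})(∏_{j=q+1}^{d−1} x_{(j−1)t+2})·x_{(d−1)t+3} for 1 ≤ q ≤ d−1 be as below. Then for any 1 ≤ a < b ≤ d−1, the pair (w_a, w_b) is sorted. -/

import Mathlib

/-!
If `u = ∏ x_{f j}` and `v = ∏ x_{g j}` over the same index list satisfy
`f 0 ≤ g 0 ≤ f 1 ≤ g 1 ≤ ⋯`, then this interleaving is the sorted index list of `uv`, so the
sorting operator returns `(u, v)`. For `u = w_b`, `v = w_a` with `a ≤ b` this holds because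
`w_b` has index `jt + 1` or `jt + 2` at position `j` whenever `w_a` has `jt + 2`, and
`jt + 2 ≤ (j + 1)t + 1` as `t ≥ 1`; both end in `x_{(d−1)t+3}`.
-/

/-- Split a list into (odd-position entries, even-position entries), positions counted from 1. -/
def altSplit {α : Type*} : List α → List α × List α
  | [] => ([], [])
  | a :: l => (a :: (altSplit l).2, (altSplit l).1)

/-- The weakly increasing list of indices of a monomial (viewed as a multiset of variable indices). -/
def mSort (m : Multiset ℕ) : List ℕ := m.sort (· ≤ ·)

/-- The sorting operator: merge the indices of `u` and `v` in weakly increasing order and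
give the odd positions to the first component, the even positions to the second. -/
def sortPair (u v : Multiset ℕ) : Multiset ℕ × Multiset ℕ :=
  (↑(altSplit (mSort (u + v))).1, ↑(altSplit (mSort (u + v))).2)

/-- A pair of monomials is sorted if the sorting operator fixes it (up to swapping). -/
def SortedPair (u v : Multiset ℕ) : Prop :=
  sortPair u v = (u, v) ∨ sortPair u v = (v, u)

/-- A monomial is `t`-spread if consecutive indices (in weakly increasing order) differ by ≥ t. -/
def TSpread (t : ℕ) (m : Multiset ℕ) : Prop :=
  (mSort m).Chain' (fun a b => a + t ≤ b)

/-- `v` is componentwise dominated by `u`. -/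
def Dominates (v u : Multiset ℕ) : Prop :=
  List.Forall₂ (· ≤ ·) (mSort v) (mSort u)

/-- The minimal generators of the t-spread principal Borel ideal `B_t(u)`:
t-spread monomials of the same degree componentwise dominated by `u`. -/
def BtGens (t : ℕ) (u : Multiset ℕ) : Set (Multiset ℕ) :=
  {v | Multiset.card v = Multiset.card u ∧ TSpread t v ∧ Dominates v u}

/-- The sorted graph of `B_t(u)`: vertices the minimal generators, edges the sorted pairs. -/
def sortedGraph (t : ℕ) (u : Multiset ℕ) : SimpleGraph ↥(BtGens t u) :=
  SimpleGraph.fromRel (fun v w => SortedPair v.1 w.1)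

/-- The graph has an induced cycle of length `n ≥ 4`. -/
def HasInducedCycle {V : Type*} (G : SimpleGraph V) : Prop :=
  ∃ n : ℕ, 4 ≤ n ∧ ∃ f : ZMod n → V, Function.Injective f ∧
    ∀ i j : ZMod n, G.Adj (f i) (f j) ↔ (j = i + 1 ∨ i = j + 1)

section Interleave

variable {ι α : Type*}

lemma altSplit_flatMap_pair (f g : ι → α) (l : List ι) :
    altSplit (l.flatMap fun j => [f j, g j]) = (l.map f, l.map g) := by
  induction l with
  | nil => rfl
  | cons x l ih => simp [altSplit, ih]

lemma coe_flatMap_pair (f g : ι → α) (l : List ι) :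
    ((l.flatMap fun j => [f j, g j] : List α) : Multiset α) = ↑(l.map f) + ↑(l.map g) := by
  induction l with
  | nil => rfl
  | cons x l ih =>
    simp only [List.flatMap_cons, List.cons_append, List.nil_append, List.map_cons,
      ← Multiset.cons_coe, ih, Multiset.cons_add, Multiset.add_cons, Multiset.cons_swap]

lemma isChain_flatMap_pair [Preorder α] (f g : ι → α) (l : List ι)
    (hfg : ∀ j ∈ l, f j ≤ g j) (hl : l.IsChain fun i j => g i ≤ f j) :
    (l.flatMap fun j => [f j, g j]).IsChain (· ≤ ·) := by
  induction l with
  | nil => simp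
  | cons x l ih =>
    cases l with
    | nil => simpa using hfg x (by simp)
    | cons y l =>
      rw [List.isChain_cons_cons] at hl
      have htail := ih (fun j hj => hfg j (List.mem_cons_of_mem _ hj)) hl.2
      simp only [List.flatMap_cons, List.cons_append, List.nil_append] at htail ⊢
      rw [List.isChain_cons_cons, List.isChain_cons_cons]
      exact ⟨hfg x (by simp), hl.1, htail⟩

end Interleave

section Sorting

variable {ι : Type*}

lemma mSort_coe_of_pairwise {l : List ℕ} (h : l.Pairwise (· ≤ ·)) : mSort ↑l = l :=
  List.mergeSort_eq_self _ h

lemma sortPair_comm (u v : Multiset ℕ) : sortPair u v = sortPair v u := by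
  rw [sortPair, sortPair, add_comm]

lemma SortedPair.symm {u v : Multiset ℕ} (h : SortedPair u v) : SortedPair v u := by
  rw [SortedPair, sortPair_comm]
  exact Or.symm h

lemma sortPair_map_of_pairwise_flatMap (f g : ι → ℕ) (l : List ι)
    (h : (l.flatMap fun j => [f j, g j]).Pairwise (· ≤ ·)) :
    sortPair ↑(l.map f) ↑(l.map g) = (↑(l.map f), ↑(l.map g)) := by
  rw [sortPair, ← coe_flatMap_pair, mSort_coe_of_pairwise h, altSplit_flatMap_pair]

lemma sortedPair_map_of_interleaved (f g : ι → ℕ) (l : List ι)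
    (hfg : ∀ j ∈ l, f j ≤ g j) (hl : l.IsChain fun i j => g i ≤ f j) :
    SortedPair ↑(l.map f) ↑(l.map g) :=
  Or.inl <| sortPair_map_of_pairwise_flatMap f g l <|
    List.isChain_iff_pairwise.mp (isChain_flatMap_pair f g l hfg hl)

end Sorting

section BFamily

/-- The index of the `(j+1)`-th variable of `w_q`, for `e = d - 1` and `j ≤ e`. -/
def bFamily (t e q j : ℕ) : ℕ :=
  if j < q then j * t + 1 else if j < e then j * t + 2 else e * t + 3

lemma coe_map_range_bFamily (t : ℕ) {e q : ℕ} (hq : q ≤ e) :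
    (↑((List.range (e + 1)).map (bFamily t e q)) : Multiset ℕ) =
      ↑((List.range e).map fun j => if j < q then j * t + 1 else j * t + 2) + {e * t + 3} := by
  have hbody : (List.range e).map (bFamily t e q) =
      (List.range e).map fun j => if j < q then j * t + 1 else j * t + 2 :=
    List.map_congr_left fun j hj => by
      rw [List.mem_range] at hj
      simp [bFamily, hj]
  rw [List.range_succ, List.map_append, hbody, ← Multiset.coe_add]
  simp [bFamily, show ¬ e < q by omega]

lemma bFamily_le_of_le (t : ℕ) {e a b j : ℕ} (hab : a ≤ b) (hj : j ≤ e) :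
    bFamily t e b j ≤ bFamily t e a j := by
  have : j * t ≤ e * t := Nat.mul_le_mul_right t hj
  unfold bFamily
  split_ifs <;> omega

lemma bFamily_le_succ {t : ℕ} (ht : 1 ≤ t) {e a b j : ℕ} (hj : j < e) :
    bFamily t e a j ≤ bFamily t e b (j + 1) := by
  have : (j + 1) * t ≤ e * t := Nat.mul_le_mul_right t hj
  have : (j + 1) * t = j * t + t := by ring
  unfold bFamily
  split_ifs <;> omega

lemma sortedPair_bFamily {t : ℕ} (ht : 1 ≤ t) {e a b : ℕ} (hab : a ≤ b) :
    SortedPair ↑((List.range (e + 1)).map (bFamily t e b))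
      ↑((List.range (e + 1)).map (bFamily t e a)) :=
  sortedPair_map_of_interleaved _ _ _
    (fun _ hj => bFamily_le_of_le t hab (Nat.lt_succ_iff.mp (List.mem_range.mp hj)))
    ((List.isChain_range_succ _ e).mpr fun _ hj => bFamily_le_succ ht hj)

end BFamily

theorem B_family_sorted_general (t d : ℕ) (ht : 1 ≤ t) (a b : ℕ)
    (hab : a < b) (hb : b ≤ d - 1) :
    SortedPair
      (↑((List.range (d - 1)).map (fun j => if j < a then j * t + 1 else j * t + 2)) +
        {(d - 1) * t + 3})
      (↑((List.range (d - 1)).map (fun j => if j < b then j * t + 1 else j * t + 2)) +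
        {(d - 1) * t + 3}) := by
  generalize d - 1 = e at hb ⊢
  rw [← coe_map_range_bFamily t (hab.le.trans hb), ← coe_map_range_bFamily t hb]
  exact (sortedPair_bFamily ht hab.le).symm

/-- any two distinct members of the B-family
w_q = (∏_{j=1}^{q} x_{(j−1)t+1})(∏_{j=q+1}^{d−1} x_{(j−1)t+2})·x_{(d−1)t+3}
(1 ≤ q ≤ d−1) form a sorted pair. -/
theorem B_family_sorted (t d : ℕ) (ht : 1 ≤ t) (hd : 3 ≤ d) (a b : ℕ)
    (ha : 1 ≤ a) (hab : a < b) (hb : b ≤ d - 1) :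
    SortedPair
      (↑((List.range (d - 1)).map (fun j => if j < a then j * t + 1 else j * t + 2)) +
        {(d - 1) * t + 3})
      (↑((List.range (d - 1)).map (fun j => if j < b then j * t + 1 else j * t + 2)) +
        {(d - 1) * t + 3}) :=
  B_family_sorted_general t d ht a b hab hb
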